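/- arXiv:2603.21367 — 2 statements merged into one kernel-verified Lean document; each statement's English description precedes it below -/
import Mathlib

section
/- For variables x_1,...,x_n in a commutative ring R with 1, one has n! · 2^n · (x_1 x_2 ⋯ x_n) = ∑_{s ∈ {-1,1}^n} (∏_j s_j) · (∑_i s_i x_i)^n. -/
set_option maxHeartbeats 1000000

open Finset

/-- Polarization identity: `n! · 2^n · x₁⋯xₙ = ∑_{s∈{-1,1}^n} (∏ sⱼ)(∑ sᵢxᵢ)^n`. -/
theorem polarization_identity (R : Type*) [CommRing R] (n : ℕ) (x : Fin n → R) :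
    (n.factorial : R) * 2 ^ n * ∏ i, x i =
      ∑ s : Fin n → Bool,
        (∏ j, (if s j then (1 : R) else -1)) *
          (∑ i, (if s i then (1 : R) else -1) * x i) ^ n := by
  classical
  set ε : Bool → R := fun b => if b then 1 else -1 with hε
  have hsq : ∀ b, ε b * ε b = 1 := by rintro (_|_) <;> simp [ε]
  -- multiplicity of j in f
  set m : (Fin n → Fin n) → Fin n → ℕ :=
    fun f j => (univ.filter fun k => f k = j).card with hm
  simp only [show ∀ b : Bool, (if b then (1 : R) else -1) = ε b from fun _ => rfl]
  have hpow : ∀ a : R, a ^ n = ∏ _k : Fin n, a := fun a => by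
    rw [Finset.prod_const, Finset.card_univ, Fintype.card_fin]
  -- Step 1: expand the n-th power as a sum over functions
  have expand : ∀ s : Fin n → Bool,
      (∑ i, ε (s i) * x i) ^ n
        = ∑ f : Fin n → Fin n, ∏ k, ε (s (f k)) * x (f k) := by
    intro s
    rw [hpow, Finset.prod_univ_sum]
    rw [Fintype.piFinset_univ]
  rw [Finset.sum_congr rfl fun s _ => by rw [expand s, Finset.mul_sum]]
  rw [Finset.sum_comm]
  -- Step 2: compute inner sum over sign vectors for fixed f
  have inner : ∀ f : Fin n → Fin n,
      ∑ s : Fin n → Bool, (∏ j, ε (s j)) * ∏ k, ε (s (f k)) * x (f k)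
        = (∏ k, x (f k)) * ∏ j, (if Odd (m f j) then (2 : R) else 0) := by
    intro f
    have key : ∀ s : Fin n → Bool,
        (∏ j, ε (s j)) * ∏ k, ε (s (f k)) * x (f k)
          = (∏ k, x (f k)) * ∏ j, ε (s j) ^ (m f j + 1) := by
      intro s
      have h1 : ∏ k, ε (s (f k)) = ∏ j, ε (s j) ^ (m f j) := by
        rw [← Finset.prod_fiberwise' univ f (fun j => ε (s j))]
        exact Finset.prod_congr rfl fun j _ => by rw [Finset.prod_const]
      rw [Finset.prod_mul_distrib, h1, ← mul_assoc, ← Finset.prod_mul_distrib, mul_comm]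
      congr 1
      exact Finset.prod_congr rfl fun j _ => by rw [pow_succ, mul_comm]
    rw [Finset.sum_congr rfl fun s _ => key s, ← Finset.mul_sum]
    congr 1
    have swap : ∑ i ∈ Fintype.piFinset (fun _ : Fin n => (univ : Finset Bool)),
        ∏ j, ε (i j) ^ (m f j + 1) = ∏ j, ∑ b : Bool, ε b ^ (m f j + 1) :=
      (Finset.prod_univ_sum (fun _ : Fin n => (univ : Finset Bool))
        (fun j b => ε b ^ (m f j + 1))).symm
    rw [← Fintype.piFinset_univ, swap]
    refine Finset.prod_congr rfl fun j _ => ?_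
    rw [Fintype.sum_bool]
    rcases Nat.even_or_odd (m f j) with he | ho
    · have : ¬ Odd (m f j) := by simpa [Nat.not_odd_iff_even] using he
      have : Odd (m f j + 1) := Even.add_one he
      simp [ε, this.neg_one_pow, Nat.not_odd_iff_even.2 he]
    · have : Even (m f j + 1) := Odd.add_one ho
      simp [ε, this.neg_one_pow, ho]
      norm_num
  rw [Finset.sum_congr rfl fun f _ => inner f]
  -- Step 3: the parity product is 2^n for bijections, 0 otherwise
  have parity : ∀ f : Fin n → Fin n,
      (∏ j, (if Odd (m f j) then (2 : R) else 0))
        = if Function.Bijective f then (2 : R) ^ n else 0 := by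
    intro f
    by_cases hf : Function.Bijective f
    · have h1 : ∀ j, m f j = 1 := by
        intro j
        obtain ⟨k, hk⟩ := hf.2 j
        apply le_antisymm
        · apply Finset.card_le_one.2
          intro a ha b hb
          exact hf.1 ((Finset.mem_filter.1 ha).2.trans (Finset.mem_filter.1 hb).2.symm)
        · exact Finset.card_pos.2 ⟨k, Finset.mem_filter.2 ⟨Finset.mem_univ _, hk⟩⟩
      rw [if_pos hf]
      simp only [h1]
      norm_num
    · have hns : ¬ Function.Surjective f := by
        intro hs
        exact hf (Finite.surjective_iff_bijective.1 hs)
      obtain ⟨j, hj⟩ := not_forall.1 hns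
      push_neg at hj
      have hmj : m f j = 0 := by
        rw [hm]
        simp only [Finset.card_eq_zero, Finset.filter_eq_empty_iff]
        intro k _
        exact hj k
      rw [if_neg hf]
      apply Finset.prod_eq_zero (Finset.mem_univ j)
      simp [hmj]
  -- Step 4: restrict the sum to bijections = permutations
  rw [Finset.sum_congr rfl fun f _ => by rw [parity f, mul_ite, mul_zero]]
  rw [Finset.sum_ite, Finset.sum_const_zero, add_zero]
  have step : ∑ f ∈ univ.filter (fun f : Fin n → Fin n => Function.Bijective f),
      (∏ k, x (f k)) * 2 ^ n
      = ∑ σ : Equiv.Perm (Fin n), (∏ k, x (σ k)) * 2 ^ n := by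
    refine Finset.sum_bij' (fun f hf => Equiv.ofBijective f (Finset.mem_filter.1 hf).2)
      (fun σ _ => ⇑σ) (fun _ _ => Finset.mem_univ _)
      (fun σ _ => Finset.mem_filter.2 ⟨Finset.mem_univ _, σ.bijective⟩)
      (fun f hf => rfl) (fun σ _ => by ext k; rfl) (fun f hf => rfl)
  rw [step]
  rw [Finset.sum_congr rfl fun σ _ => by rw [Equiv.prod_comp σ x]]
  rw [Finset.sum_const, Finset.card_univ, Fintype.card_perm, Fintype.card_fin, nsmul_eq_mul]
  ring
end

section
/- For every natural number n ≥ 1, (1/n!) · ∑_{k=0}^{n} C(n,k) · (-1)^k · (n - 2k)^n = 2^n. -/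
/-!
Writing `n - 2k = -2 (k - n/2)`, the sum is `(-2)^n` times the alternating sum
`∑ (-1)^k C(n,k) (y + k)^n` at `y = -n/2`. By Newton's formula that alternating sum is
`(-1)^n` times the `n`-th forward difference of `x ↦ x^n`, which is the constant `n!`.
-/

open Finset Nat

theorem sum_range_choose_mul_neg_one_pow_mul_add_pow {R : Type*} [CommRing R] (n : ℕ) (y : R) :
    ∑ k ∈ range (n + 1), (n.choose k : R) * (-1) ^ k * (y + k) ^ n = (-1) ^ n * n ! := by
  have newton := fwdDiff_iter_eq_sum_shift 1 (fun x : R ↦ x ^ n) n y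
  rw [fwdDiff_iter_eq_factorial, Pi.natCast_apply] at newton
  rw [newton, mul_sum]
  refine sum_congr rfl fun k hk ↦ ?_
  have hsign : (-1 : R) ^ n * (-1) ^ (n - k) = (-1) ^ k := by
    have hkn : k ≤ n := Nat.lt_succ_iff.mp (mem_range.mp hk)
    rw [← pow_add, show n + (n - k) = 2 * (n - k) + k by omega, pow_add, pow_mul, neg_one_sq,
      one_pow, one_mul]
  simp only [zsmul_eq_mul, nsmul_eq_mul, mul_one]
  push_cast
  rw [← hsign]
  ring

theorem polarization_constant_general (n : ℕ) :
    (1 / (n.factorial : ℚ)) *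
      ∑ k ∈ Finset.range (n + 1),
        (n.choose k : ℚ) * (-1 : ℚ) ^ k * ((n : ℚ) - 2 * k) ^ n = 2 ^ n := by
  have hsum : ∑ k ∈ range (n + 1), (n.choose k : ℚ) * (-1) ^ k * ((n : ℚ) - 2 * k) ^ n
      = (-2) ^ n * ∑ k ∈ range (n + 1), (n.choose k : ℚ) * (-1) ^ k * (-(n / 2 : ℚ) + k) ^ n := by
    rw [mul_sum]
    refine sum_congr rfl fun k _ ↦ ?_
    rw [show (n : ℚ) - 2 * k = -2 * (-(n / 2 : ℚ) + k) by ring, mul_pow]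
    ring
  rw [hsum, sum_range_choose_mul_neg_one_pow_mul_add_pow, ← mul_assoc ((-2 : ℚ) ^ n), ← mul_pow]
  field_simp

/-- `(1/n!) ∑_{k=0}^n C(n,k) (-1)^k (n-2k)^n = 2^n` for `n ≥ 1`. -/
theorem polarization_constant (n : ℕ) (hn : 1 ≤ n) :
    (1 / (n.factorial : ℚ)) *
      ∑ k ∈ Finset.range (n + 1),
        (n.choose k : ℚ) * (-1 : ℚ) ^ k * ((n : ℚ) - 2 * k) ^ n = 2 ^ n :=
  polarization_constant_general n
end
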